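/- Let t be a normal λ-term, v a λ-term, and α, x two variables such that x ∈ Fv(t). If t[λx₁…λxₙ.α / x] →β v, then α ∈ Fv(v). -/
import Mathlib


/-!
Common development: pure λ-calculus in de Bruijn notation, β-reduction,
weak head reduction, types of system F (with type constants), the typing
systems F, F₀ (F without (∀e)) and the simple system S, saturated sets and
interpretations, and the notions of input / output / data types, following
Farkh-Nour, "Les types de données syntaxiques du système F".
-/

namespace FarkhNour

/-- Pure λ-terms, in de Bruijn notation. -/
inductive Trm : Type
  | var : ℕ → Trm
  | app : Trm → Trm → Trm
  | lam : Trm → Trm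

/-- Lift (shift) by `d` the free variables of a term, starting at index `k`. -/
def liftTrm (d : ℕ) : ℕ → Trm → Trm
  | k, .var n => if n < k then .var n else .var (n + d)
  | k, .app a b => .app (liftTrm d k a) (liftTrm d k b)
  | k, .lam a => .lam (liftTrm d (k + 1) a)

/-- β-substitution `t[u/k]` (the binder for `k` is consumed: variables above `k`
are decremented), as used in the β-reduction rule. -/
def substTrm : Trm → ℕ → Trm → Trm
  | .var n, k, u => if n < k then .var n else if n = k then liftTrm k 0 u else .var (n - 1)
  | .app a b, k, u => .app (substTrm a k u) (substTrm b k u)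
  | .lam a, k, u => .lam (substTrm a (k + 1) u)

/-- Named-style capture-avoiding substitution `t[u/x]` of the term `u` for the
free variable `x` of `t` : the other free variables are left unchanged. -/
def replaceVar : Trm → ℕ → Trm → Trm
  | .var n, k, u => if n = k then u else .var n
  | .app a b, k, u => .app (replaceVar a k u) (replaceVar b k u)
  | .lam a, k, u => .lam (replaceVar a (k + 1) (liftTrm 1 0 u))

/-- Lifting of a parallel substitution under a binder. -/
def liftSub (σ : ℕ → Trm) : ℕ → Trm
  | 0 => .var 0
  | n + 1 => liftTrm 1 0 (σ n)

/-- Simultaneous (parallel) capture-avoiding substitution. -/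
def msubst (σ : ℕ → Trm) : Trm → Trm
  | .var n => σ n
  | .app a b => .app (msubst σ a) (msubst σ b)
  | .lam a => .lam (msubst (liftSub σ) a)

/-- One step of β-reduction. -/
inductive BetaStep : Trm → Trm → Prop
  | beta (t u : Trm) : BetaStep (.app (.lam t) u) (substTrm t 0 u)
  | appL {t t' : Trm} (u : Trm) : BetaStep t t' → BetaStep (.app t u) (.app t' u)
  | appR (t : Trm) {u u' : Trm} : BetaStep u u' → BetaStep (.app t u) (.app t u')
  | lam {t t' : Trm} : BetaStep t t' → BetaStep (.lam t) (.lam t')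

/-- Many-step β-reduction `t →β t'`. -/
def BetaRed : Trm → Trm → Prop := Relation.ReflTransGen BetaStep

/-- β-equivalence `t ≃β t'`. -/
def BetaEq : Trm → Trm → Prop := Relation.EqvGen BetaStep

/-- A term is normal iff no β-reduction step applies to it. -/
def IsNormal (t : Trm) : Prop := ∀ u, ¬ BetaStep t u

/-- `FreeIn k t` : the variable (de Bruijn index) `k` occurs free in `t`. -/
def FreeIn : ℕ → Trm → Prop
  | k, .var n => n = k
  | k, .app a b => FreeIn k a ∨ FreeIn k b
  | k, .lam a => FreeIn (k + 1) a

/-- A closed term. -/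
def TrmClosed (t : Trm) : Prop := ∀ k, ¬ FreeIn k t

/-- One step of weak head reduction. -/
inductive WHStep : Trm → Trm → Prop
  | beta (t u : Trm) : WHStep (.app (.lam t) u) (substTrm t 0 u)
  | app {t t' : Trm} (u : Trm) : WHStep t t' → WHStep (.app t u) (.app t' u)

/-- Weak head reduction `t ≻_f t'`. -/
def WHRed : Trm → Trm → Prop := Relation.ReflTransGen WHStep

/-- Types of system F, in de Bruijn notation, with type constants
(the constant `0` is the distinguished constant `O`, the constant `1` is `⊥`). -/
inductive Ty : Type
  | var : ℕ → Ty
  | const : ℕ → Ty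
  | arr : Ty → Ty → Ty
  | all : Ty → Ty

/-- The distinguished type constant `O`. -/
def tyO : Ty := .const 0

/-- The distinguished type constant `⊥`. -/
def tyBot : Ty := .const 1

/-- Lift (shift) by `d` the free type variables, starting at index `k`. -/
def liftTy (d : ℕ) : ℕ → Ty → Ty
  | k, .var n => if n < k then .var n else .var (n + d)
  | _, .const c => .const c
  | k, .arr a b => .arr (liftTy d k a) (liftTy d k b)
  | k, .all a => .all (liftTy d (k + 1) a)

/-- Capture-avoiding type substitution `A[G/k]`. -/
def substTy : Ty → ℕ → Ty → Ty
  | .var n, k, G => if n < k then .var n else if n = k then liftTy k 0 G else .var (n - 1)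
  | .const c, _, _ => .const c
  | .arr a b, k, G => .arr (substTy a k G) (substTy b k G)
  | .all a, k, G => .all (substTy a (k + 1) G)

/-- `TyFreeIn k A` : the type variable `k` occurs free in `A`. -/
def TyFreeIn : ℕ → Ty → Prop
  | k, .var n => n = k
  | _, .const _ => False
  | k, .arr a b => TyFreeIn k a ∨ TyFreeIn k b
  | k, .all a => TyFreeIn (k + 1) a

/-- Boolean version of `TyFreeIn`. -/
def tyFreeInB : ℕ → Ty → Bool
  | k, .var n => n == k
  | _, .const _ => false
  | k, .arr a b => tyFreeInB k a || tyFreeInB k b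
  | k, .all a => tyFreeInB (k + 1) a

/-- A closed type. -/
def TyClosed (A : Ty) : Prop := ∀ k, ¬ TyFreeIn k A

/-- `ContainsConst c A` : the type constant `c` occurs in `A`. -/
def ContainsConst : ℕ → Ty → Prop
  | _, .var _ => False
  | c, .const c' => c' = c
  | c, .arr a b => ContainsConst c a ∨ ContainsConst c b
  | c, .all a => ContainsConst c a

/-- The typing judgment `Γ ⊢_F t : A` of system F, with rules
(ax), (→i), (→e), (∀i), (∀e). -/
inductive TypF : List Ty → Trm → Ty → Prop
  | var (Γ : List Ty) (n : ℕ) (A : Ty) : Γ[n]? = some A → TypF Γ (.var n) A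
  | abs {Γ : List Ty} {t : Trm} {B C : Ty} :
      TypF (B :: Γ) t C → TypF Γ (.lam t) (.arr B C)
  | app {Γ : List Ty} {u v : Trm} {B C : Ty} :
      TypF Γ u (.arr B C) → TypF Γ v B → TypF Γ (.app u v) C
  | allI {Γ : List Ty} {t : Trm} {A : Ty} :
      TypF (Γ.map (liftTy 1 0)) t A → TypF Γ t (.all A)
  | allE {Γ : List Ty} {t : Trm} {A : Ty} (G : Ty) :
      TypF Γ t (.all A) → TypF Γ t (substTy A 0 G)

/-- The typing judgment `Γ ⊢_{F₀} t : A` of system F₀, i.e. system F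
without the rule (∀e). -/
inductive TypF0 : List Ty → Trm → Ty → Prop
  | var (Γ : List Ty) (n : ℕ) (A : Ty) : Γ[n]? = some A → TypF0 Γ (.var n) A
  | abs {Γ : List Ty} {t : Trm} {B C : Ty} :
      TypF0 (B :: Γ) t C → TypF0 Γ (.lam t) (.arr B C)
  | app {Γ : List Ty} {u v : Trm} {B C : Ty} :
      TypF0 Γ u (.arr B C) → TypF0 Γ v B → TypF0 Γ (.app u v) C
  | allI {Γ : List Ty} {t : Trm} {A : Ty} :
      TypF0 (Γ.map (liftTy 1 0)) t A → TypF0 Γ t (.all A)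

/-- The typing judgment `Γ ⊢_S t : A` of the simple type system S,
with rules (ax), (→i), (→e) only. -/
inductive TypS : List Ty → Trm → Ty → Prop
  | var (Γ : List Ty) (n : ℕ) (A : Ty) : Γ[n]? = some A → TypS Γ (.var n) A
  | abs {Γ : List Ty} {t : Trm} {B C : Ty} :
      TypS (B :: Γ) t C → TypS Γ (.lam t) (.arr B C)
  | app {Γ : List Ty} {u v : Trm} {B C : Ty} :
      TypS Γ u (.arr B C) → TypS Γ v B → TypS Γ (.app u v) C

/-- Quantifier-free types (types of the simple type system S). -/
def QFree : Ty → Prop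
  | .var _ => True
  | .const _ => True
  | .arr a b => QFree a ∧ QFree b
  | .all _ => False

/-- An input type : a closed type all of whose normal inhabitants are
typable in system F₀. -/
def IsInputType (E : Ty) : Prop :=
  TyClosed E ∧ ∀ t : Trm, IsNormal t → TypF [] t E → TypF0 [] t E

/-- An output type : a closed type `S` not containing the constant `O` such
that for every normal term `t`, if `α : O ⊢_F t : S` then `α ∉ Fv(t)`. -/
def IsOutputType (S : Ty) : Prop :=
  TyClosed S ∧ ¬ ContainsConst 0 S ∧
    ∀ t : Trm, IsNormal t → TypF [tyO] t S → ¬ FreeIn 0 t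

/-- A syntactical data type : a closed type which is both input and output. -/
def IsSyntacticalDataType (D : Ty) : Prop := IsInputType D ∧ IsOutputType D

mutual
  /-- The ∀⁺ types (positive quantifiers). -/
  inductive PosTy : Ty → Prop
    | var (n : ℕ) : PosTy (.var n)
    | arr {B A : Ty} : NegTy B → PosTy A → PosTy (.arr B A)
    | all {A : Ty} : PosTy A → TyFreeIn 0 A → PosTy (.all A)
  /-- The ∀⁻ types (negative quantifiers). -/
  inductive NegTy : Ty → Prop
    | var (n : ℕ) : NegTy (.var n)
    | arr {B A : Ty} : PosTy B → NegTy A → NegTy (.arr B A)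
end

/-- `EndsInConst c A` : the type `A` ends in the type constant `c`. -/
inductive EndsInConst : ℕ → Ty → Prop
  | base (c : ℕ) : EndsInConst c (.const c)
  | arr {c : ℕ} {A : Ty} (B : Ty) : EndsInConst c A → EndsInConst c (.arr B A)
  | all {c : ℕ} {A : Ty} : EndsInConst c A → EndsInConst c (.all A)

/-- `EndsInVar k A` : the type `A` ends in the type variable `k`
(crossing a quantifier ∀X with X ≠ the variable is allowed). -/
inductive EndsInVar : ℕ → Ty → Prop
  | base (k : ℕ) : EndsInVar k (.var k)
  | arr {k : ℕ} {A : Ty} (B : Ty) : EndsInVar k A → EndsInVar k (.arr B A)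
  | all {k : ℕ} {A : Ty} : EndsInVar (k + 1) A → EndsInVar k (.all A)

/-- The side condition of the restricted rule (∀e)_F : the body `A` of `∀X A`
(the variable X having index `k`) is of the form
`∀X₀(A₁ → ∀X₁(A₂ → … → ∀X_{n-1}(A_n → ∀X_n Y)…))` with `Y = X` or one of the
`A_i` ending in `X`. -/
inductive FFForm : ℕ → Ty → Prop
  | base (k : ℕ) : FFForm k (.var k)
  | all {k : ℕ} {A : Ty} : FFForm (k + 1) A → FFForm k (.all A)
  | arrTail {k : ℕ} {C : Ty} (B : Ty) : FFForm k C → FFForm k (.arr B C)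
  | arrHit {k : ℕ} {B C : Ty} : EndsInVar k B → (∃ j, EndsInVar j C) →
      FFForm k (.arr B C)

/-- The typing judgment of system F_F : system F where the rule (∀e) is
replaced by the restricted rule (∀e)_F. -/
inductive TypFF : List Ty → Trm → Ty → Prop
  | var (Γ : List Ty) (n : ℕ) (A : Ty) : Γ[n]? = some A → TypFF Γ (.var n) A
  | abs {Γ : List Ty} {t : Trm} {B C : Ty} :
      TypFF (B :: Γ) t C → TypFF Γ (.lam t) (.arr B C)
  | app {Γ : List Ty} {u v : Trm} {B C : Ty} :
      TypFF Γ u (.arr B C) → TypFF Γ v B → TypFF Γ (.app u v) C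
  | allI {Γ : List Ty} {t : Trm} {A : Ty} :
      TypFF (Γ.map (liftTy 1 0)) t A → TypFF Γ t (.all A)
  | allE {Γ : List Ty} {t : Trm} {A : Ty} (G : Ty) :
      FFForm 0 A → TypFF Γ t (.all A) → TypFF Γ t (substTy A 0 G)

/-- An output type of system F_F. -/
def IsOutputTypeFF (S : Ty) : Prop :=
  TyClosed S ∧ ¬ ContainsConst 0 S ∧
    ∀ t : Trm, IsNormal t → TypFF [tyO] t S → ¬ FreeIn 0 t

/-- Saturated sets of λ-terms. -/
def Saturated (G : Set Trm) : Prop := ∀ t u : Trm, WHRed t u → u ∈ G → t ∈ G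

/-- `G → G'` on sets of λ-terms. -/
def SetArr (G G' : Set Trm) : Set Trm := {u : Trm | ∀ t ∈ G, Trm.app u t ∈ G'}

/-- Extension of an interpretation by a set for the (de Bruijn) variable 0. -/
def consEnv (G : Set Trm) (I : ℕ → Set Trm) : ℕ → Set Trm
  | 0 => G
  | n + 1 => I n

/-- The value `|A|_I` of a type in an interpretation (`C` interprets the
type constants, `I` the type variables). -/
def TyVal (C : ℕ → Set Trm) : Ty → (ℕ → Set Trm) → Set Trm
  | .var n, I => I n
  | .const c, _ => C c
  | .arr a b, I => SetArr (TyVal C a I) (TyVal C b I)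
  | .all a, I => {t : Trm | ∀ G : Set Trm, Saturated G → t ∈ TyVal C a (consEnv G I)}

/-- `|A|` : the intersection of the values of `A` under all interpretations
by saturated sets. -/
def TyGlobal (A : Ty) : Set Trm :=
  {t : Trm | ∀ C I : ℕ → Set Trm, (∀ c, Saturated (C c)) → (∀ n, Saturated (I n)) →
    t ∈ TyVal C A I}

/-- A data type in Krivine's sense : a closed type `A` with `|A| ≠ ∅` such that
every term of `|A|` β-reduces to a closed term. -/
def IsDataType (A : Ty) : Prop :=
  TyClosed A ∧ TyGlobal A ≠ ∅ ∧
    ∀ t ∈ TyGlobal A, ∃ t' : Trm, BetaRed t t' ∧ TrmClosed t'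

/-- The product type `A ∧ B = ∀X((A → (B → X)) → X)` (X fresh). -/
def tyAnd (A B : Ty) : Ty :=
  .all (.arr (.arr (liftTy 1 0 A) (.arr (liftTy 1 0 B) (.var 0))) (.var 0))

/-- The disjoint sum type `A ∨ B = ∀X((A → X) → ((B → X) → X))` (X fresh). -/
def tyOr (A B : Ty) : Ty :=
  .all (.arr (.arr (liftTy 1 0 A) (.var 0))
    (.arr (.arr (liftTy 1 0 B) (.var 0)) (.var 0)))

/-- The type `LA = ∀X(X → ((A → (X → X)) → X))` of lists of objects of `A`. -/
def tyList (A : Ty) : Ty :=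
  .all (.arr (.var 0)
    (.arr (.arr (liftTy 1 0 A) (.arr (.var 0) (.var 0))) (.var 0)))

/-- Negation `¬A = A → ⊥`. -/
def tyNeg (A : Ty) : Ty := .arr A tyBot

/-- The Gödel translation `A*` : every atomic subformula `R` is replaced
by `¬R`. -/
def godel : Ty → Ty
  | .var n => .arr (.var n) tyBot
  | .const c => .arr (.const c) tyBot
  | .arr a b => .arr (godel a) (godel b)
  | .all a => .all (godel a)

/-- `T` is a storage operator for the pair of types `(E, S)`. -/
def IsStorageOpPair (T : Trm) (E S : Ty) : Prop :=
  TrmClosed T ∧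
    ∀ t : Trm, TypF [] t E →
      ∃ τ τ' : Trm, BetaEq τ τ' ∧ TypF [] τ' S ∧
        ∀ θ : Trm, BetaEq θ t →
          ∀ f : ℕ, ¬ FreeIn f θ → ¬ FreeIn f τ →
            ∃ σ : ℕ → Trm,
              WHRed (.app (.app T θ) (.var f)) (.app (.var f) (msubst σ τ))

/-- `T` is a storage operator for the type `D`. -/
def IsStorageOp (T : Trm) (D : Ty) : Prop := IsStorageOpPair T D D

/-- The term `λx₁…λxₙ.α` (n-fold abstraction over the free variable `α`). -/
def nlam (n a : ℕ) : Trm := Trm.lam^[n] (Trm.var (a + n))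

/-- The term `p_n = λx₁…λxₙλx.x`. -/
def pTrm (n : ℕ) : Trm := Trm.lam^[n] (Trm.lam (Trm.var 0))

/-- `B₁ → … → B_n → A`. -/
def mkArr (Bs : List Ty) (A : Ty) : Ty := Bs.foldr Ty.arr A

/-- The length `Lg(E)` of a type : the number of occurrences of `→` in it. -/
def Lg : Ty → ℕ
  | .var _ => 0
  | .const _ => 0
  | .arr a b => Lg a + Lg b + 1
  | .all a => Lg a

/-- `SubtypeOf A E` : `A` is a subtype (subformula) of `E`. -/
inductive SubtypeOf : Ty → Ty → Prop
  | refl (A : Ty) : SubtypeOf A A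
  | arrL {A B C : Ty} : SubtypeOf A B → SubtypeOf A (.arr B C)
  | arrR {A B C : Ty} : SubtypeOf A C → SubtypeOf A (.arr B C)
  | all {A B : Ty} : SubtypeOf A B → SubtypeOf A (.all B)

/-- `InAppPos k t` : the variable `k` occurs in application (function)
position in `t`, i.e. some subterm of `t` is of the form `(k)u`. -/
def InAppPos : ℕ → Trm → Prop
  | _, .var _ => False
  | k, .app u v => u = .var k ∨ InAppPos k u ∨ InAppPos k v
  | k, .lam u => InAppPos (k + 1) u

/-- The simple translation `A^s` : `X^s = X`, `(B → C)^s = B^s → C^s`,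
`(∀X B)^s = B^s` (the variables freed by erasing the quantifiers are collapsed
onto the type variable `0`). `d` counts the erased quantifiers. -/
def eraseTyAux : ℕ → Ty → Ty
  | d, .var n => .var (n - d)
  | _, .const c => .const c
  | d, .arr a b => .arr (eraseTyAux d a) (eraseTyAux d b)
  | d, .all a => eraseTyAux (d + 1) a

/-- The simple translation `A^s`. -/
def eraseTy : Ty → Ty := eraseTyAux 0

/-- The identity term `λx.x`. -/
def idTrm : Trm := .lam (.var 0)

/-- The boolean `𝟙 = λxλy.x`. -/
def oneTrm : Trm := .lam (.lam (.var 1))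

/-- The pair of λ-terms `(T_F, T'_F)` associated with a type `F` (the
distinguished variable `X` having de Bruijn index `k`; the term variable `α`
is the free term variable `0`):
`T_F = T'_F = λx.x` if `X ∉ Fv(F)`;
`T_X = λxλβλg.(g)xα`, `T'_X = λx.(x)α𝟙`;
`T_{C→D} = λxλy.(T_D)(x)(T'_C)y`, `T'_{C→D} = λxλy.(T'_D)(x)(T_C)y`;
`T_{∀Y B} = λx.(T_B)x`, `T'_{∀Y B} = λx.(T'_B)x`. -/
def TTpair : ℕ → Ty → Trm × Trm
  | k, .var n =>
      if n = k then
        (.lam (.lam (.lam (.app (.app (.var 0) (.var 2)) (.var 3)))),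
         .lam (.app (.app (.var 0) (.var 1)) oneTrm))
      else (idTrm, idTrm)
  | _, .const _ => (idTrm, idTrm)
  | k, .arr C D =>
      if tyFreeInB k (.arr C D) then
        (.lam (.lam (.app (liftTrm 2 0 (TTpair k D).1)
            (.app (.var 1) (.app (liftTrm 2 0 (TTpair k C).2) (.var 0))))),
         .lam (.lam (.app (liftTrm 2 0 (TTpair k D).2)
            (.app (.var 1) (.app (liftTrm 2 0 (TTpair k C).1) (.var 0))))))
      else (idTrm, idTrm)
  | k, .all B =>
      if tyFreeInB k (.all B) then
        (.lam (.app (liftTrm 1 0 (TTpair (k + 1) B).1) (.var 0)),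
         .lam (.app (liftTrm 1 0 (TTpair (k + 1) B).2) (.var 0)))
      else (idTrm, idTrm)


/-! Auxiliary development for Statement 13. -/

lemma nlam_zero (a : ℕ) : nlam 0 a = .var a := by simp [nlam]

lemma nlam_succ (m a : ℕ) : nlam (m + 1) a = .lam (nlam m (a + 1)) := by
  unfold nlam
  rw [Function.iterate_succ_apply', show a + (m + 1) = (a + 1) + m from by omega]

lemma nlam_ne_app {m a : ℕ} {u v : Trm} : nlam m a ≠ .app u v := by
  cases m <;> simp [nlam_zero, nlam_succ]

lemma nlam_eq_lam {m a : ℕ} {t : Trm} (h : nlam m a = .lam t) :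
    ∃ m', m = m' + 1 ∧ t = nlam m' (a + 1) := by
  cases m with
  | zero => simp [nlam_zero] at h
  | succ m =>
    rw [nlam_succ] at h
    injection h with h'
    exact ⟨m, rfl, h'.symm⟩

lemma nlam_no_step : ∀ (m a : ℕ) (w : Trm), ¬ BetaStep (nlam m a) w := by
  intro m
  induction m with
  | zero => intro a w h; rw [nlam_zero] at h; cases h
  | succ m ih =>
    intro a w h
    rw [nlam_succ] at h
    cases h with
    | lam h' => exact ih _ _ h'

lemma lift_nlam : ∀ (m a k : ℕ), k ≤ a → liftTrm 1 k (nlam m a) = nlam m (a + 1) := by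
  intro m
  induction m with
  | zero =>
    intro a k hk
    rw [nlam_zero, nlam_zero]
    simp [liftTrm, Nat.not_lt.mpr hk]
  | succ m ih =>
    intro a k hk
    rw [nlam_succ, nlam_succ]
    simp only [liftTrm]
    rw [ih (a + 1) (k + 1) (by omega)]

lemma subst_nlam : ∀ (m a k : ℕ) (u : Trm), k ≤ a →
    substTrm (nlam m (a + 1)) k u = nlam m a := by
  intro m
  induction m with
  | zero =>
    intro a k u hk
    rw [nlam_zero, nlam_zero]
    simp only [substTrm]
    rw [if_neg (by omega), if_neg (by omega)]
    simp
  | succ m ih =>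
    intro a k u hk
    rw [nlam_succ, nlam_succ]
    simp only [substTrm]
    rw [ih (a + 1) (k + 1) u (by omega)]

/-- Shape invariant: `false` = neutral term (spine of applications whose base is
a variable or `nlam m α`, with well-shaped arguments), `true` = general shape. -/
inductive Sh : Bool → ℕ → Trm → Prop
  | var (α y : ℕ) : Sh false α (.var y)
  | nl {α : ℕ} {v : Trm} (m : ℕ) : v = nlam m α → Sh false α v
  | app {α : ℕ} {h e : Trm} : Sh false α h → Sh true α e → Sh false α (.app h e)
  | ne {α : ℕ} {h : Trm} : Sh false α h → Sh true α h
  | lam {α : ℕ} {b : Trm} : Sh true (α + 1) b → Sh true α (.lam b)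

/-- Neutral term whose spine base is a variable. -/
inductive NeV : ℕ → Trm → Prop
  | var (α y : ℕ) : NeV α (.var y)
  | app {α : ℕ} {h e : Trm} : NeV α h → Sh true α e → NeV α (.app h e)

/-- Neutral term whose spine base is `nlam m α`. -/
inductive NeN : ℕ → Trm → Prop
  | nl {α : ℕ} {v : Trm} (m : ℕ) : v = nlam m α → NeN α v
  | app {α : ℕ} {h e : Trm} : NeN α h → Sh true α e → NeN α (.app h e)

/-- Shape with a persistent occurrence of `α`. -/
inductive ShO : Bool → ℕ → Trm → Prop
  | nen {α : ℕ} {v : Trm} : NeN α v → ShO false α v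
  | appO {α : ℕ} {h e : Trm} : ShO false α h → Sh true α e → ShO false α (.app h e)
  | appArg {α : ℕ} {h e : Trm} : NeV α h → ShO true α e → ShO false α (.app h e)
  | ne {α : ℕ} {h : Trm} : ShO false α h → ShO true α h
  | lam {α : ℕ} {b : Trm} : ShO true (α + 1) b → ShO true α (.lam b)

lemma NeV_sh {α : ℕ} {v : Trm} (h : NeV α v) : Sh false α v := by
  induction h with
  | var => exact .var _ _
  | app _ he ih => exact .app ih he

lemma NeN_sh {α : ℕ} {v : Trm} (h : NeN α v) : Sh false α v := by
  induction h with
  | nl m hm => exact .nl m hm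
  | app _ he ih => exact .app ih he

lemma Sh_step {v w : Trm} (st : BetaStep v w) : ∀ b α, Sh b α v → Sh b α w := by
  induction st with
  | beta t u =>
    intro b α h
    have key : Sh false α (.app (.lam t) u) → Sh false α (substTrm t 0 u) := by
      intro h
      cases h with
      | nl m hm => exact absurd hm nlam_ne_app.symm
      | app hh he =>
        cases hh with
        | nl m hm =>
          obtain ⟨m', rfl, ht⟩ := nlam_eq_lam hm.symm
          rw [ht, subst_nlam m' α 0 u (Nat.zero_le α)]
          exact .nl m' rfl
    cases b with
    | false => exact key h
    | true => cases h with | ne h' => exact .ne (key h')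
  | appL u st' ih =>
    intro b α h
    cases b with
    | false =>
      cases h with
      | nl m hm => exact absurd hm nlam_ne_app.symm
      | app hh he => exact .app (ih false α hh) he
    | true =>
      cases h with
      | ne h' =>
        cases h' with
        | nl m hm => exact absurd hm nlam_ne_app.symm
        | app hh he => exact .ne (.app (ih false α hh) he)
  | appR t st' ih =>
    intro b α h
    cases b with
    | false =>
      cases h with
      | nl m hm => exact absurd hm nlam_ne_app.symm
      | app hh he => exact .app hh (ih true α he)
    | true =>
      cases h with
      | ne h' =>
        cases h' with
        | nl m hm => exact absurd hm nlam_ne_app.symm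
        | app hh he => exact .ne (.app hh (ih true α he))
  | lam st' ih =>
    intro b α h
    cases b with
    | false =>
      cases h with
      | nl m hm =>
        obtain ⟨m', rfl, ht⟩ := nlam_eq_lam hm.symm
        exact absurd (ht ▸ st') (nlam_no_step _ _ _)
    | true =>
      cases h with
      | ne h' =>
        cases h' with
        | nl m hm =>
          obtain ⟨m', rfl, ht⟩ := nlam_eq_lam hm.symm
          exact absurd (ht ▸ st') (nlam_no_step _ _ _)
      | lam h' => exact .lam (ih true (α + 1) h')

lemma NeV_step {v w : Trm} (st : BetaStep v w) : ∀ α, NeV α v → NeV α w := by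
  induction st with
  | beta t u =>
    intro α h
    cases h with
    | app hh he => cases hh
  | appL u st' ih =>
    intro α h
    cases h with
    | app hh he => exact .app (ih α hh) he
  | appR t st' ih =>
    intro α h
    cases h with
    | app hh he => exact .app hh (Sh_step st' true α he)
  | lam st' ih => intro α h; cases h

lemma NeN_step {v w : Trm} (st : BetaStep v w) : ∀ α, NeN α v → NeN α w := by
  induction st with
  | beta t u =>
    intro α h
    cases h with
    | nl m hm => exact absurd hm nlam_ne_app.symm
    | app hh he =>
      cases hh with
      | nl m hm =>
        obtain ⟨m', rfl, ht⟩ := nlam_eq_lam hm.symm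
        rw [ht, subst_nlam m' α 0 u (Nat.zero_le α)]
        exact .nl m' rfl
  | appL u st' ih =>
    intro α h
    cases h with
    | nl m hm => exact absurd hm nlam_ne_app.symm
    | app hh he => exact .app (ih α hh) he
  | appR t st' ih =>
    intro α h
    cases h with
    | nl m hm => exact absurd hm nlam_ne_app.symm
    | app hh he => exact .app hh (Sh_step st' true α he)
  | lam st' ih =>
    intro α h
    cases h with
    | nl m hm =>
      obtain ⟨m', rfl, ht⟩ := nlam_eq_lam hm.symm
      exact absurd (ht ▸ st') (nlam_no_step _ _ _)

lemma ShO_step {v w : Trm} (st : BetaStep v w) : ∀ b α, ShO b α v → ShO b α w := by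
  induction st with
  | beta t u =>
    intro b α h
    have key : ShO false α (.app (.lam t) u) → ShO false α (substTrm t 0 u) := by
      intro h
      cases h with
      | nen hn => exact .nen (NeN_step (.beta t u) α hn)
      | appO hh he =>
        cases hh with
        | nen hn =>
          cases hn with
          | nl m hm =>
            obtain ⟨m', rfl, ht⟩ := nlam_eq_lam hm.symm
            rw [ht, subst_nlam m' α 0 u (Nat.zero_le α)]
            exact .nen (.nl m' rfl)
      | appArg hv ho => cases hv
    cases b with
    | false => exact key h
    | true => cases h with | ne h' => exact .ne (key h')
  | appL u st' ih =>
    intro b α h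
    have key : ∀ {t t' : Trm}, BetaStep t t' → (∀ b α, ShO b α t → ShO b α t') →
        ShO false α (.app t u) → ShO false α (.app t' u) := by
      intro t t' st'' ih' h
      cases h with
      | nen hn => exact .nen (NeN_step (.appL u st'') α hn)
      | appO hh he => exact .appO (ih' false α hh) he
      | appArg hv ho => exact .appArg (NeV_step st'' α hv) ho
    cases b with
    | false => exact key st' ih h
    | true => cases h with | ne h' => exact .ne (key st' ih h')
  | appR t st' ih =>
    intro b α h
    have key : ∀ {u u' : Trm}, BetaStep u u' → (∀ b α, ShO b α u → ShO b α u') →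
        ShO false α (.app t u) → ShO false α (.app t u') := by
      intro u u' st'' ih' h
      cases h with
      | nen hn => exact .nen (NeN_step (.appR t st'') α hn)
      | appO hh he => exact .appO hh (Sh_step st'' true α he)
      | appArg hv ho => exact .appArg hv (ih' true α ho)
    cases b with
    | false => exact key st' ih h
    | true => cases h with | ne h' => exact .ne (key st' ih h')
  | lam st' ih =>
    intro b α h
    cases b with
    | false =>
      cases h with
      | nen hn =>
        cases hn with
        | nl m hm =>
          obtain ⟨m', rfl, ht⟩ := nlam_eq_lam hm.symm
          exact absurd (ht ▸ st') (nlam_no_step _ _ _)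
    | true =>
      cases h with
      | ne h' =>
        cases h' with
        | nen hn =>
          cases hn with
          | nl m hm =>
            obtain ⟨m', rfl, ht⟩ := nlam_eq_lam hm.symm
            exact absurd (ht ▸ st') (nlam_no_step _ _ _)
      | lam h' => exact .lam (ih true (α + 1) h')

lemma freeIn_nlam : ∀ m a : ℕ, FreeIn a (nlam m a) := by
  intro m
  induction m with
  | zero => intro a; rw [nlam_zero]; exact rfl
  | succ m ih => intro a; rw [nlam_succ]; exact ih (a + 1)

lemma NeN_free {α : ℕ} {v : Trm} (h : NeN α v) : FreeIn α v := by
  induction h with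
  | nl m hm => rw [hm]; exact freeIn_nlam m α
  | app _ _ ih => exact Or.inl ih

lemma ShO_free {b : Bool} {α : ℕ} {v : Trm} (h : ShO b α v) : FreeIn α v := by
  induction h with
  | nen hn => exact NeN_free hn
  | appO _ _ ih => exact Or.inl ih
  | appArg _ _ ih => exact Or.inr ih
  | ne _ ih => exact ih
  | lam _ ih => exact ih

lemma normal_app {a b : Trm} (ht : IsNormal (.app a b)) :
    IsNormal a ∧ IsNormal b ∧ ∀ t, a ≠ .lam t := by
  refine ⟨fun u st => ht _ (.appL b st), fun u st => ht _ (.appR a st), ?_⟩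
  rintro t rfl
  exact ht _ (.beta t b)

lemma normal_lam {a : Trm} (ht : IsNormal (.lam a)) : IsNormal a :=
  fun u st => ht _ (.lam st)

lemma init : ∀ (t : Trm) (α x n : ℕ), IsNormal t →
    (Sh true α (replaceVar t x (nlam n α)) ∧
      (FreeIn x t → ShO true α (replaceVar t x (nlam n α)))) ∧
    ((∀ u, t ≠ .lam u) →
      ((NeV α (replaceVar t x (nlam n α)) ∨ NeN α (replaceVar t x (nlam n α))) ∧
        (FreeIn x t → ShO false α (replaceVar t x (nlam n α))))) := by
  intro t
  induction t with
  | var y =>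
    intro α x n _
    by_cases hyx : y = x
    · have hr : replaceVar (.var y) x (nlam n α) = nlam n α := by
        simp [replaceVar, hyx]
      rw [hr]
      exact ⟨⟨.ne (.nl n rfl), fun _ => .ne (.nen (.nl n rfl))⟩,
        fun _ => ⟨Or.inr (.nl n rfl), fun _ => .nen (.nl n rfl)⟩⟩
    · have hr : replaceVar (.var y) x (nlam n α) = .var y := by
        simp [replaceVar, hyx]
      rw [hr]
      exact ⟨⟨.ne (.var α y), fun hf => absurd hf hyx⟩,
        fun _ => ⟨Or.inl (.var α y), fun hf => absurd hf hyx⟩⟩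
  | app a b iha ihb =>
    intro α x n ht
    obtain ⟨hna, hnb, hal⟩ := normal_app ht
    obtain ⟨⟨sha, shoa⟩, hne⟩ := iha α x n hna
    obtain ⟨dichA, shoFa⟩ := hne hal
    obtain ⟨⟨shb, shob⟩, -⟩ := ihb α x n hnb
    have shaF : Sh false α (replaceVar a x (nlam n α)) := dichA.elim NeV_sh NeN_sh
    have hr : replaceVar (.app a b) x (nlam n α) =
        .app (replaceVar a x (nlam n α)) (replaceVar b x (nlam n α)) := rfl
    rw [hr]
    have occ : FreeIn x (.app a b) →
        ShO false α (.app (replaceVar a x (nlam n α)) (replaceVar b x (nlam n α))) := by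
      intro hf
      cases hf with
      | inl hfa => exact .appO (shoFa hfa) shb
      | inr hfb =>
        cases dichA with
        | inl hv => exact .appArg hv (shob hfb)
        | inr hn => exact .nen (.app hn shb)
    refine ⟨⟨.ne (.app shaF shb), fun hf => .ne (occ hf)⟩, fun _ => ⟨?_, occ⟩⟩
    cases dichA with
    | inl hv => exact Or.inl (.app hv shb)
    | inr hn => exact Or.inr (.app hn shb)
  | lam a ih =>
    intro α x n ht
    have hr : replaceVar (.lam a) x (nlam n α) =
        .lam (replaceVar a (x + 1) (nlam n (α + 1))) := by
      show Trm.lam (replaceVar a (x + 1) (liftTrm 1 0 (nlam n α))) = _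
      rw [lift_nlam n α 0 (Nat.zero_le α)]
    rw [hr]
    obtain ⟨⟨sha, shoa⟩, -⟩ := ih (α + 1) (x + 1) n (normal_lam ht)
    exact ⟨⟨.lam sha, fun hf => .lam (shoa hf)⟩, fun h => absurd rfl (h a)⟩

/-- if `t` is normal, `x ∈ Fv(t)` and
`t[λx₁…λxₙ.α / x] →β v`, then `α ∈ Fv(v)`. -/
theorem free_alpha_after_subst (t v : Trm) (α x n : ℕ)
    (ht : IsNormal t) (hx : FreeIn x t)
    (h : BetaRed (replaceVar t x (nlam n α)) v) : FreeIn α v := by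
  have h0 := ((init t α x n ht).1).2 hx
  have inv : ShO true α v := by
    induction h with
    | refl => exact h0
    | tail _ st ih => exact ShO_step st true α ih
  exact ShO_free inv

end FarkhNour
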